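/- For any pair (a, x) of coprime integers with 1 ≤ a ≤ x, deg (a, x)_q = deg (x, a)_q. -/

import Mathlib

open Polynomial

/-- The `q`-integer `[c]_q = 1 + q + ⋯ + q^{c-1}` as a polynomial in `ℤ[q]`. -/
noncomputable def qInt (c : ℕ) : Polynomial ℤ := ∑ i ∈ Finset.range c, X ^ i

/-- The polynomial `(a, b)_q ∈ ℤ[q]` associated to a pair of coprime positive
integers: `(1, n)_q = (n, 1)_q = [n+1]_q`; if `a < b` then
`(a,b)_q = (a-r, r)_q + q·(a, b-a)_q` with `r = b % a`; if `a > b` then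
`(a,b)_q = (a-b, b)_q + q^⌈a/b⌉·(r, b-r)_q` with `r = a % b`.
(Values on non-coprime or zero inputs are junk.) -/
noncomputable def W : ℕ → ℕ → Polynomial ℤ
  | 1, b => qInt (b + 1)
  | a, 1 => qInt (a + 1)
  | 0, _ => 0
  | _, 0 => 0
  | a + 2, b + 2 =>
    if a < b then
      W (a + 2 - (b + 2) % (a + 2)) ((b + 2) % (a + 2)) + X * W (a + 2) (b - a)
    else
      W (a - b) (b + 2) +
        X ^ ((a + 2 + (b + 2) - 1) / (b + 2)) *
          W ((a + 2) % (b + 2)) (b + 2 - (a + 2) % (b + 2))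
  termination_by a b => a + b
  decreasing_by
  · have := Nat.mod_lt (b + 2) (show 0 < a + 2 by omega); omega
  · omega
  · omega
  · have := Nat.mod_lt (a + 2) (show 0 < b + 2 by omega); omega

/-- The sequence of digits of the negative continued fraction expansion
`x/a = [c₁, …, c_l]⁻` (each `cᵢ = ⌈·⌉` of the current fraction). By convention
`ncfDigits x 0 = []` (for `1/0 = ∞`) and `ncfDigits x 1 = [x]`. -/
def ncfDigits : ℕ → ℕ → List ℕ
  | _, 0 => []
  | x, 1 => [x]
  | x, a + 2 =>
      (x + (a + 2) - 1) / (a + 2) ::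
        ncfDigits (a + 2) ((x + (a + 2) - 1) / (a + 2) * (a + 2) - x)
  termination_by x a => a
  decreasing_by
    have := Nat.div_mul_le_self (x + (a + 2) - 1) (a + 2); omega

/-- The (coprime) numerator and denominator of the Morier-Genoud–Ovsienko
`q`-deformation of the negative continued fraction `[c₁, …, c_l]⁻`, computed by
the continuant recursion `(N, D) ↦ ([c]_q·N - q^{c-1}·D, N)`, with `(1, 0)` for
the empty list. -/
noncomputable def qCF : List ℕ → Polynomial ℤ × Polynomial ℤ
  | [] => (1, 0)
  | c :: rest =>
      let p := qCF rest
      (qInt c * p.1 - X ^ (c - 1) * p.2, p.1)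

/-- Numerator `N_q(x/a)` of the Morier-Genoud–Ovsienko `q`-rational `[x/a]_q`. -/
noncomputable def Nq (x a : ℕ) : Polynomial ℤ := (qCF (ncfDigits x a)).1

/-- Denominator `D_q(x/a)` of the Morier-Genoud–Ovsienko `q`-rational `[x/a]_q`. -/
noncomputable def Dq (x a : ℕ) : Polynomial ℤ := (qCF (ncfDigits x a)).2

/-- The normalized Jones polynomial `J_{x/a}(q) = q·N_q(x/a) + (1-q)·D_q(x/a)`. -/
noncomputable def Jq (x a : ℕ) : Polynomial ℤ := X * Nq x a + (1 - X) * Dq x a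

/-! `(a, b)_q` is monic of degree `quotientSum a b`, the sum of the partial quotients of the
continued fraction of `b / a`, i.e. the number of steps of the subtractive Euclidean algorithm
on `(a, b)`; this count is symmetric in `a` and `b`. In both branches of the recursion for
`(a, b)_q` the second summand is a power of `q` times a monic polynomial of the expected degree,
and the first summand has strictly smaller degree. -/

def quotientSum : ℕ → ℕ → ℕ
  | 0, _ => 0
  | a + 1, b => b / (a + 1) + quotientSum (b % (a + 1)) (a + 1)
  decreasing_by exact Nat.mod_lt _ a.succ_pos

@[simp]
lemma quotientSum_zero_left (b : ℕ) : quotientSum 0 b = 0 := by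
  rw [quotientSum]

lemma quotientSum_of_pos {a : ℕ} (b : ℕ) (ha : 0 < a) :
    quotientSum a b = b / a + quotientSum (b % a) a := by
  obtain ⟨a, rfl⟩ := Nat.exists_eq_add_one_of_ne_zero ha.ne'
  rw [quotientSum]

lemma quotientSum_one_left (b : ℕ) : quotientSum 1 b = b := by
  rw [quotientSum_of_pos b one_pos, Nat.mod_one, quotientSum_zero_left, Nat.div_one, add_zero]

lemma quotientSum_comm (a b : ℕ) : quotientSum a b = quotientSum b a := by
  suffices ∀ {a b : ℕ}, a < b → quotientSum b a = quotientSum a b by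
    rcases lt_trichotomy a b with h | rfl | h
    exacts [(this h).symm, rfl, this h]
  intro a b h
  rw [quotientSum_of_pos a (a.zero_le.trans_lt h), Nat.div_eq_of_lt h, Nat.mod_eq_of_lt h,
    zero_add]

lemma quotientSum_eq_sub_self_right_add_one {a b : ℕ} (ha : 0 < a) (hab : a ≤ b) :
    quotientSum a b = quotientSum a (b - a) + 1 := by
  obtain ⟨c, rfl⟩ := Nat.exists_eq_add_of_le' hab
  rw [Nat.add_sub_cancel, quotientSum_of_pos _ ha, quotientSum_of_pos c ha,
    Nat.add_div_right _ ha, Nat.add_mod_right]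
  omega

lemma quotientSum_eq_sub_self_left_add_one {a b : ℕ} (hb : 0 < b) (hba : b ≤ a) :
    quotientSum a b = quotientSum (a - b) b + 1 := by
  rw [quotientSum_comm, quotientSum_eq_sub_self_right_add_one hb hba, quotientSum_comm]

lemma Nat.mod_ne_zero_of_coprime {a b : ℕ} (hco : a.Coprime b) (hb : 2 ≤ b) : a % b ≠ 0 :=
  fun h => by have := hco.symm.eq_one_of_dvd (Nat.dvd_of_mod_eq_zero h); omega

lemma Nat.add_sub_one_div_eq_div_add_one {a b : ℕ} (hb : 0 < b) (h : a % b ≠ 0) :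
    (a + b - 1) / b = a / b + 1 := by
  have hmod : (b - 1) % b = b - 1 := Nat.mod_eq_of_lt (by omega)
  rw [Nat.add_sub_assoc hb, Nat.add_div hb, Nat.div_eq_of_lt (by omega : b - 1 < b), hmod,
    if_pos (by omega)]

open Polynomial

lemma isMonicOfDegree_qInt_succ (n : ℕ) : IsMonicOfDegree (qInt (n + 1)) n := by
  induction n with
  | zero => simp [qInt]
  | succ n ih =>
    rw [qInt, Finset.sum_range_succ]
    exact (isMonicOfDegree_X_pow ℤ _).add_left (ih.natDegree_eq.trans_lt n.lt_succ_self)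

lemma W_one_right (a : ℕ) : W a 1 = qInt (a + 1) := by
  rcases eq_or_ne a 1 with rfl | ha
  · rw [W.eq_1]
  · exact W.eq_2 a ha

lemma W_of_lt {a b : ℕ} (ha : 2 ≤ a) (hab : a < b) :
    W a b = W (a - b % a) (b % a) + X * W a (b - a) := by
  obtain ⟨a, rfl⟩ := Nat.exists_eq_add_of_le' ha
  obtain ⟨b, rfl⟩ := Nat.exists_eq_add_of_le' (ha.trans hab.le)
  rw [W.eq_5, if_pos (by omega)]
  congr 3
  omega

lemma W_of_le {a b : ℕ} (hb : 2 ≤ b) (hba : b ≤ a) :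
    W a b = W (a - b) b + X ^ ((a + b - 1) / b) * W (a % b) (b - a % b) := by
  obtain ⟨b, rfl⟩ := Nat.exists_eq_add_of_le' hb
  obtain ⟨a, rfl⟩ := Nat.exists_eq_add_of_le' (hb.trans hba)
  rw [W.eq_5, if_neg (by omega)]
  congr 2
  omega

lemma isMonicOfDegree_W_of_lt {a b : ℕ}
    (ih : ∀ c d, c + d < a + b → c.Coprime d → IsMonicOfDegree (W c d) (quotientSum c d))
    (hco : a.Coprime b) (ha : 2 ≤ a) (hab : a < b) :
    IsMonicOfDegree (W a b) (quotientSum a b) := by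
  set r := b % a
  have hr0 : r ≠ 0 := Nat.mod_ne_zero_of_coprime hco.symm ha
  have hra : r < a := Nat.mod_lt _ (by omega)
  have hcor : a.Coprime r := ((ZMod.coprime_mod_iff_coprime b a).2 hco.symm).symm
  have h₁ := ih (a - r) r (by omega) ((Nat.coprime_sub_self_left hra.le).2 hcor)
  have h₂ := ih a (b - a) (by omega) ((Nat.coprime_sub_self_right hab.le).2 hco)
  have e₁ := quotientSum_eq_sub_self_right_add_one (by omega) hab.le
  have e₂ : quotientSum a b = b / a + quotientSum a r := by
    rw [quotientSum_of_pos b (by omega), quotientSum_comm r]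
  have e₃ := quotientSum_eq_sub_self_left_add_one (by omega) hra.le
  have hq : 0 < b / a := Nat.div_pos hab.le (by omega)
  rw [W_of_lt ha hab]
  convert ((isMonicOfDegree_X ℤ).mul h₂).add_left (by rw [h₁.natDegree_eq]; omega) using 1
  omega

lemma isMonicOfDegree_W_of_le {a b : ℕ}
    (ih : ∀ c d, c + d < a + b → c.Coprime d → IsMonicOfDegree (W c d) (quotientSum c d))
    (hco : a.Coprime b) (hb : 2 ≤ b) (hba : b ≤ a) :
    IsMonicOfDegree (W a b) (quotientSum a b) := by
  set r := a % b
  have hr0 : r ≠ 0 := Nat.mod_ne_zero_of_coprime hco hb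
  have hrb : r < b := Nat.mod_lt _ (by omega)
  have hcor : r.Coprime b := (ZMod.coprime_mod_iff_coprime a b).2 hco
  have h₁ := ih (a - b) b (by omega) ((Nat.coprime_sub_self_left hba).2 hco)
  have h₂ := ih r (b - r) (by omega) ((Nat.coprime_sub_self_right hrb.le).2 hcor)
  have e₁ := quotientSum_eq_sub_self_left_add_one (by omega) hba
  have e₂ : quotientSum a b = a / b + quotientSum r b := by
    rw [quotientSum_comm, quotientSum_of_pos a (by omega)]
  have e₃ := quotientSum_eq_sub_self_right_add_one (Nat.pos_of_ne_zero hr0) hrb.le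
  rw [W_of_le hb hba, Nat.add_sub_one_div_eq_div_add_one (by omega) hr0]
  convert ((isMonicOfDegree_X_pow ℤ (a / b + 1)).mul h₂).add_left
    (by rw [h₁.natDegree_eq]; omega) using 1
  omega

theorem isMonicOfDegree_W {a b : ℕ} (hco : a.Coprime b) :
    IsMonicOfDegree (W a b) (quotientSum a b) := by
  rcases Nat.lt_or_ge a 2 with ha | ha
  · interval_cases a
    · obtain rfl : b = 1 := (Nat.coprime_zero_left b).1 hco
      simpa [W_one_right] using isMonicOfDegree_qInt_succ 0
    · simpa [W.eq_1, quotientSum_one_left] using isMonicOfDegree_qInt_succ b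
  rcases Nat.lt_or_ge b 2 with hb | hb
  · interval_cases b
    · exact absurd ((Nat.coprime_zero_right a).1 hco) (by omega)
    · simpa [W_one_right, quotientSum_comm a, quotientSum_one_left]
        using isMonicOfDegree_qInt_succ a
  have ih c d (_ : c + d < a + b) (h : c.Coprime d) := isMonicOfDegree_W h
  rcases lt_or_ge a b with hab | hba
  · exact isMonicOfDegree_W_of_lt ih hco ha hab
  · exact isMonicOfDegree_W_of_le ih hco hb hba
termination_by a + b

theorem W_natDegree_symm_general (a x : ℕ) (hco : Nat.Coprime a x) :
    (W a x).natDegree = (W x a).natDegree := by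
  rw [(isMonicOfDegree_W hco).natDegree_eq, (isMonicOfDegree_W hco.symm).natDegree_eq,
    quotientSum_comm]

/-- For coprime `1 ≤ a ≤ x`: `deg (a, x)_q = deg (x, a)_q`. -/
theorem W_natDegree_symm (a x : ℕ) (hco : Nat.Coprime a x) (ha : 1 ≤ a) (hax : a ≤ x) :
    (W a x).natDegree = (W x a).natDegree :=
  W_natDegree_symm_general a x hco
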